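/- Define f(z) = H(1/2 + √(4z + 5)/6) for z ∈ [−1, 1], where H is the binary entropy function, and define E(θ) = (1/3)·(f(cos θ) + f(cos(θ + 2π/3)) + f(cos(θ − 2π/3))) for θ ∈ ℝ. Then for every θ ∈ ℝ one has E(θ) ≥ (2/3)·H((1/2)·(1 − 1/√3)), and E(0) = (2/3)·H((1/2)·(1 − 1/√3)). (This value, ≈ 0.496 ebits, is the entanglement cost of the trine measurement.) -/

import Mathlib

/-- The binary entropy function `H(x) = −x·log₂ x − (1−x)·log₂(1−x)`
(with `H(0) = H(1) = 0`, by the convention `logb 2 0 = 0`). -/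
noncomputable def binH (x : ℝ) : ℝ :=
  -(x * Real.logb 2 x) - (1 - x) * Real.logb 2 (1 - x)

/-- `f(z) = H(1/2 + √(4z + 5)/6)`. -/
noncomputable def trineF (z : ℝ) : ℝ :=
  binH (1 / 2 + Real.sqrt (4 * z + 5) / 6)

/-- `E(θ) = (1/3)·(f(cos θ) + f(cos(θ + 2π/3)) + f(cos(θ − 2π/3)))`. -/
noncomputable def trineE (θ : ℝ) : ℝ :=
  (1 / 3) * (trineF (Real.cos θ) + trineF (Real.cos (θ + 2 * Real.pi / 3)) +
    trineF (Real.cos (θ - 2 * Real.pi / 3)))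

/-! ### Auxiliary machinery for the proof -/

open Real Set in
private lemma log1p_le_cubic {s : ℝ} (hs : -1 < s) :
    Real.log (1 + s) ≤ s - s ^ 2 / 2 + s ^ 3 / 3 := by
  have hderiv : ∀ x : ℝ, -1 < x →
      HasDerivAt (fun y : ℝ => y - y ^ 2 / 2 + y ^ 3 / 3 - Real.log (1 + y))
        (x ^ 3 / (1 + x)) x := by
    intro x hx
    have h1 : (0:ℝ) < 1 + x := by linarith
    have h0 : HasDerivAt (fun y : ℝ => 1 + y) 1 x := by
      simpa using (hasDerivAt_id x).const_add (1:ℝ)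
    have hlog : HasDerivAt (fun y : ℝ => Real.log (1 + y)) ((1 + x)⁻¹ * 1) x :=
      (Real.hasDerivAt_log (ne_of_gt h1)).comp x h0
    have hpoly : HasDerivAt (fun y : ℝ => y - y ^ 2 / 2 + y ^ 3 / 3)
        (1 - (↑2 * x ^ (2 - 1)) / 2 + (↑3 * x ^ (3 - 1)) / 3) x :=
      ((hasDerivAt_id x).sub ((hasDerivAt_pow 2 x).div_const 2)).add
        ((hasDerivAt_pow 3 x).div_const 3)
    have := hpoly.fun_sub hlog
    refine this.congr_deriv ?_
    push_cast
    field_simp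
    ring
  have key : 0 ≤ s - s ^ 2 / 2 + s ^ 3 / 3 - Real.log (1 + s) := by
    rcases le_or_gt 0 s with h | h
    · have hmono : MonotoneOn (fun y : ℝ => y - y ^ 2 / 2 + y ^ 3 / 3 - Real.log (1 + y))
          (Ici (0:ℝ)) := by
        apply monotoneOn_of_deriv_nonneg (convex_Ici 0)
        · intro x hx
          have hx' : (-1:ℝ) < x := by
            have : (0:ℝ) ≤ x := hx
            linarith
          exact ((hderiv x hx').continuousAt).continuousWithinAt
        · intro x hx
          rw [interior_Ici] at hx
          have hx' : (-1:ℝ) < x := lt_trans (by norm_num) hx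
          exact ((hderiv x hx').differentiableAt).differentiableWithinAt
        · intro x hx
          rw [interior_Ici] at hx
          have hx0 : (0:ℝ) < x := hx
          rw [(hderiv x (by linarith)).deriv]
          positivity
      have := hmono self_mem_Ici (show s ∈ Ici (0:ℝ) from h) h
      simpa using this
    · have hanti : AntitoneOn (fun y : ℝ => y - y ^ 2 / 2 + y ^ 3 / 3 - Real.log (1 + y))
          (Icc s 0) := by
        apply antitoneOn_of_deriv_nonpos (convex_Icc s 0)
        · intro x hx
          have hx' : (-1:ℝ) < x := lt_of_lt_of_le hs hx.1
          exact ((hderiv x hx').continuousAt).continuousWithinAt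
        · intro x hx
          rw [interior_Icc] at hx
          have hx' : (-1:ℝ) < x := lt_trans hs hx.1
          exact ((hderiv x hx').differentiableAt).differentiableWithinAt
        · intro x hx
          rw [interior_Icc] at hx
          have hx' : (-1:ℝ) < x := lt_trans hs hx.1
          rw [(hderiv x hx').deriv]
          apply div_nonpos_of_nonpos_of_nonneg
          · have hx0 : x ≤ 0 := hx.2.le
            exact Odd.pow_nonpos (by decide) hx0
          · linarith
      have := hanti (show s ∈ Icc s 0 from ⟨le_refl s, h.le⟩)
        (show (0:ℝ) ∈ Icc s 0 from ⟨h.le, le_refl 0⟩) h.le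
      simpa using this
  linarith

open Real Set in
private lemma atanh_lb {t : ℝ} (h0 : 0 ≤ t) (h1 : t < 1) :
    2 * (t + t ^ 3 / 3) ≤ Real.log ((1 + t) / (1 - t)) := by
  have h1t : (0:ℝ) < 1 - t := by linarith
  have h2t : (0:ℝ) < 1 + t := by linarith
  rw [Real.log_div (ne_of_gt h2t) (ne_of_gt h1t)]
  have hderiv : ∀ x : ℝ, -1 < x → x < 1 →
      HasDerivAt (fun y : ℝ => Real.log (1 + y) - Real.log (1 - y) - 2 * (y + y ^ 3 / 3))
        (2 * x ^ 4 / (1 - x ^ 2)) x := by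
    intro x hxa hxb
    have ha : (0:ℝ) < 1 + x := by linarith
    have hb : (0:ℝ) < 1 - x := by linarith
    have h0a : HasDerivAt (fun y : ℝ => 1 + y) 1 x := by
      simpa using (hasDerivAt_id x).const_add (1:ℝ)
    have h0b : HasDerivAt (fun y : ℝ => 1 - y) (-1) x := by
      simpa using (hasDerivAt_id x).const_sub (1:ℝ)
    have hla : HasDerivAt (fun y : ℝ => Real.log (1 + y)) ((1 + x)⁻¹ * 1) x :=
      (Real.hasDerivAt_log (ne_of_gt ha)).comp x h0a
    have hlb : HasDerivAt (fun y : ℝ => Real.log (1 - y)) ((1 - x)⁻¹ * (-1)) x :=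
      (Real.hasDerivAt_log (ne_of_gt hb)).comp x h0b
    have hpoly : HasDerivAt (fun y : ℝ => 2 * (y + y ^ 3 / 3))
        (2 * (1 + (↑3 * x ^ (3 - 1)) / 3)) x :=
      (((hasDerivAt_id x).add ((hasDerivAt_pow 3 x).div_const 3))).const_mul 2
    have := (hla.fun_sub hlb).fun_sub hpoly
    refine this.congr_deriv ?_
    have h12 : (1 - x ^ 2) ≠ 0 := by nlinarith
    push_cast
    field_simp
    ring
  have hmono : MonotoneOn
      (fun y : ℝ => Real.log (1 + y) - Real.log (1 - y) - 2 * (y + y ^ 3 / 3))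
      (Icc (0:ℝ) t) := by
    apply monotoneOn_of_deriv_nonneg (convex_Icc 0 t)
    · intro x hx
      have hxa : (-1:ℝ) < x := by linarith [hx.1]
      have hxb : x < 1 := lt_of_le_of_lt hx.2 h1
      exact ((hderiv x hxa hxb).continuousAt).continuousWithinAt
    · intro x hx
      rw [interior_Icc] at hx
      have hxa : (-1:ℝ) < x := by linarith [hx.1]
      have hxb : x < 1 := lt_trans hx.2 h1
      exact ((hderiv x hxa hxb).differentiableAt).differentiableWithinAt
    · intro x hx
      rw [interior_Icc] at hx
      have hxa : (0:ℝ) < x := hx.1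
      have hxb : x < 1 := lt_trans hx.2 h1
      rw [(hderiv x (by linarith) hxb).deriv]
      have : (0:ℝ) < 1 - x ^ 2 := by nlinarith
      positivity
  have := hmono (show (0:ℝ) ∈ Icc (0:ℝ) t from ⟨le_refl 0, h0⟩)
    (show t ∈ Icc (0:ℝ) t from ⟨h0, le_refl t⟩) h0
  simp only [Real.log_one] at this
  norm_num at this
  linarith

open Real Set in
private lemma atanh_ub {t : ℝ} (h0 : 0 ≤ t) (h1 : t ≤ 1 / 2) :
    Real.log ((1 + t) / (1 - t)) ≤ 2 * (t + t ^ 3 / 3) + (8 / 15) * t ^ 5 := by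
  have h1t : (0:ℝ) < 1 - t := by linarith
  have h2t : (0:ℝ) < 1 + t := by linarith
  rw [Real.log_div (ne_of_gt h2t) (ne_of_gt h1t)]
  have hderiv : ∀ x : ℝ, -1 < x → x < 1 →
      HasDerivAt (fun y : ℝ =>
          2 * (y + y ^ 3 / 3) + (8 / 15) * y ^ 5 - (Real.log (1 + y) - Real.log (1 - y)))
        (2 * (1 + x ^ 2) + (8 / 3) * x ^ 4 - 2 / (1 - x ^ 2)) x := by
    intro x hxa hxb
    have ha : (0:ℝ) < 1 + x := by linarith
    have hb : (0:ℝ) < 1 - x := by linarith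
    have h0a : HasDerivAt (fun y : ℝ => 1 + y) 1 x := by
      simpa using (hasDerivAt_id x).const_add (1:ℝ)
    have h0b : HasDerivAt (fun y : ℝ => 1 - y) (-1) x := by
      simpa using (hasDerivAt_id x).const_sub (1:ℝ)
    have hla : HasDerivAt (fun y : ℝ => Real.log (1 + y)) ((1 + x)⁻¹ * 1) x :=
      (Real.hasDerivAt_log (ne_of_gt ha)).comp x h0a
    have hlb : HasDerivAt (fun y : ℝ => Real.log (1 - y)) ((1 - x)⁻¹ * (-1)) x :=
      (Real.hasDerivAt_log (ne_of_gt hb)).comp x h0b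
    have hp1 : HasDerivAt (fun y : ℝ => 2 * (y + y ^ 3 / 3))
        (2 * (1 + (↑3 * x ^ (3 - 1)) / 3)) x :=
      (((hasDerivAt_id x).add ((hasDerivAt_pow 3 x).div_const 3))).const_mul 2
    have hp2 : HasDerivAt (fun y : ℝ => (8 / 15 : ℝ) * y ^ 5)
        ((8 / 15 : ℝ) * (↑5 * x ^ (5 - 1))) x :=
      (hasDerivAt_pow 5 x).const_mul (8 / 15 : ℝ)
    have := (hp1.fun_add hp2).fun_sub (hla.fun_sub hlb)
    refine this.congr_deriv ?_
    have h12 : (1 - x ^ 2) ≠ 0 := by nlinarith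
    push_cast
    field_simp
    ring
  have hmono : MonotoneOn
      (fun y : ℝ =>
        2 * (y + y ^ 3 / 3) + (8 / 15) * y ^ 5 - (Real.log (1 + y) - Real.log (1 - y)))
      (Icc (0:ℝ) (1 / 2)) := by
    apply monotoneOn_of_deriv_nonneg (convex_Icc 0 (1 / 2))
    · intro x hx
      have hxa : (-1:ℝ) < x := by linarith [hx.1]
      have hxb : x < 1 := by linarith [hx.2]
      exact ((hderiv x hxa hxb).continuousAt).continuousWithinAt
    · intro x hx
      rw [interior_Icc] at hx
      have hxa : (-1:ℝ) < x := by linarith [hx.1]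
      have hxb : x < 1 := by linarith [hx.2]
      exact ((hderiv x hxa hxb).differentiableAt).differentiableWithinAt
    · intro x hx
      rw [interior_Icc] at hx
      have hxa : (0:ℝ) < x := hx.1
      have hxb : x ≤ 1 / 2 := hx.2.le
      rw [(hderiv x (by linarith) (by linarith)).deriv]
      have hx2 : (0:ℝ) < 1 - x ^ 2 := by nlinarith
      rw [sub_nonneg, div_le_iff₀ hx2]
      have h4x : (0:ℝ) ≤ 1 - 4 * x ^ 2 := by
        nlinarith [mul_nonneg (by linarith : (0:ℝ) ≤ 1 - 2 * x)
          (by linarith : (0:ℝ) ≤ 1 + 2 * x)]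
      nlinarith [mul_nonneg (pow_nonneg hxa.le 4) h4x]
  have := hmono (show (0:ℝ) ∈ Icc (0:ℝ) (1/2) from ⟨le_refl 0, by norm_num⟩)
    (show t ∈ Icc (0:ℝ) (1/2) from ⟨h0, h1⟩) h0
  simp only [Real.log_one] at this
  norm_num at this
  linarith

/-- `LU = log(1/2 + √3/6)`. -/
private noncomputable def LU : ℝ := Real.log (1 / 2 + Real.sqrt 3 / 6)

/-- `LV = log(1/2 - √3/6)`. -/
private noncomputable def LV : ℝ := Real.log (1 / 2 - Real.sqrt 3 / 6)

/-- `BB` : the linear coefficient of the quadratic (in `v = u - u²`) lower bound. -/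
private noncomputable def BB : ℝ := -6 * (LU + LV) - 3 * Real.sqrt 3 * (LU - LV)

/-- `CC` : the quadratic coefficient. -/
private noncomputable def CC : ℝ := 18 * (LU + LV) + 12 * Real.sqrt 3 * (LU - LV)

private lemma sqrt3_sq : Real.sqrt 3 ^ 2 = 3 := Real.sq_sqrt (by norm_num)

private lemma sqrt3_lb : (1.7320508 : ℝ) < Real.sqrt 3 := by
  nlinarith [sqrt3_sq, Real.sqrt_nonneg 3]

private lemma sqrt3_ub : Real.sqrt 3 < (1.7320509 : ℝ) := by
  nlinarith [sqrt3_sq, Real.sqrt_nonneg 3]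

private lemma U0_mul : (1 / 2 + Real.sqrt 3 / 6) * (3 - Real.sqrt 3) = 1 := by
  linear_combination (-1 / 6 : ℝ) * sqrt3_sq

private lemma V0_mul : (1 / 2 - Real.sqrt 3 / 6) * (3 + Real.sqrt 3) = 1 := by
  linear_combination (-1 / 6 : ℝ) * sqrt3_sq

private lemma LU_eq : LU = -Real.log (3 - Real.sqrt 3) := by
  rw [LU, eq_inv_of_mul_eq_one_left U0_mul, Real.log_inv]

private lemma LV_eq : LV = -Real.log (3 + Real.sqrt 3) := by
  rw [LV, eq_inv_of_mul_eq_one_left V0_mul, Real.log_inv]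

private lemma log3mr_lb : (0.2373914 : ℝ) ≤ Real.log (3 - Real.sqrt 3) := by
  have h1 : (1.2679491 : ℝ) ≤ 3 - Real.sqrt 3 := by linarith [sqrt3_ub]
  have h2 : Real.log (1.2679491 : ℝ) ≤ Real.log (3 - Real.sqrt 3) :=
    Real.log_le_log (by norm_num) h1
  have h3 := atanh_lb (t := 2679491 / 22679491)
    (by norm_num) (by norm_num)
  rw [show ((1:ℝ) + 2679491 / 22679491) / (1 - 2679491 / 22679491) = 1.2679491 by norm_num] at h3
  have h4 : (0.2373914 : ℝ) ≤ 2 * ((2679491 / 22679491 : ℝ) +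
      (2679491 / 22679491 : ℝ) ^ 3 / 3) := by norm_num
  linarith

private lemma log3mr_ub : Real.log (3 - Real.sqrt 3) ≤ (0.2374038 : ℝ) := by
  have h1 : 3 - Real.sqrt 3 ≤ (1.2679492 : ℝ) := by linarith [sqrt3_lb]
  have h0 : (0:ℝ) < 3 - Real.sqrt 3 := by linarith [sqrt3_ub]
  have h2 : Real.log (3 - Real.sqrt 3) ≤ Real.log (1.2679492 : ℝ) :=
    Real.log_le_log h0 h1
  have h3 := atanh_ub (t := 669873 / 5669873)
    (by norm_num) (by norm_num)
  rw [show ((1:ℝ) + 669873 / 5669873) / (1 - 669873 / 5669873) = 1.2679492 by norm_num] at h3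
  have h4 : 2 * ((669873 / 5669873 : ℝ) + (669873 / 5669873 : ℝ) ^ 3 / 3) +
      (8 / 15) * (669873 / 5669873 : ℝ) ^ 5 ≤ (0.2374038 : ℝ) := by norm_num
  linarith

private lemma LU_lb : (-0.2374038 : ℝ) ≤ LU := by
  rw [LU_eq]; linarith [log3mr_ub]

private lemma LU_ub : LU ≤ (-0.2373914 : ℝ) := by
  rw [LU_eq]; linarith [log3mr_lb]

private lemma log3pr4_lb : (0.16806265 : ℝ) ≤ Real.log ((3 + Real.sqrt 3) / 4) := by
  have h1 : (1.1830127 : ℝ) ≤ (3 + Real.sqrt 3) / 4 := by linarith [sqrt3_lb]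
  have h2 : Real.log (1.1830127 : ℝ) ≤ Real.log ((3 + Real.sqrt 3) / 4) :=
    Real.log_le_log (by norm_num) h1
  have h3 := atanh_lb (t := 1830127 / 21830127)
    (by norm_num) (by norm_num)
  rw [show ((1:ℝ) + 1830127 / 21830127) / (1 - 1830127 / 21830127) = 1.1830127 by norm_num] at h3
  have h4 : (0.16806265 : ℝ) ≤ 2 * ((1830127 / 21830127 : ℝ) +
      (1830127 / 21830127 : ℝ) ^ 3 / 3) := by norm_num
  linarith

private lemma log3pr4_ub : Real.log ((3 + Real.sqrt 3) / 4) ≤ (0.1680649 : ℝ) := by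
  have h1 : (3 + Real.sqrt 3) / 4 ≤ (1.18301273 : ℝ) := by linarith [sqrt3_ub]
  have h0 : (0:ℝ) < (3 + Real.sqrt 3) / 4 := by positivity
  have h2 : Real.log ((3 + Real.sqrt 3) / 4) ≤ Real.log (1.18301273 : ℝ) :=
    Real.log_le_log h0 h1
  have h3 := atanh_ub (t := 18301273 / 218301273)
    (by norm_num) (by norm_num)
  rw [show ((1:ℝ) + 18301273 / 218301273) / (1 - 18301273 / 218301273) = 1.18301273
    by norm_num] at h3
  have h4 : 2 * ((18301273 / 218301273 : ℝ) + (18301273 / 218301273 : ℝ) ^ 3 / 3) +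
      (8 / 15) * (18301273 / 218301273 : ℝ) ^ 5 ≤ (0.1680649 : ℝ) := by norm_num
  linarith

private lemma log3pr_split : Real.log (3 + Real.sqrt 3) =
    2 * Real.log 2 + Real.log ((3 + Real.sqrt 3) / 4) := by
  have h0 : (0:ℝ) < (3 + Real.sqrt 3) / 4 := by positivity
  have h4 : (3 + Real.sqrt 3) = 4 * ((3 + Real.sqrt 3) / 4) := by ring
  rw [h4, Real.log_mul (by norm_num) (ne_of_gt h0),
    show (4:ℝ) = 2 ^ 2 by norm_num, Real.log_pow]
  push_cast
  ring

private lemma LV_lb : (-1.5543593 : ℝ) ≤ LV := by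
  rw [LV_eq, log3pr_split]
  linarith [log3pr4_ub, Real.log_two_lt_d9]

private lemma LV_ub : LV ≤ (-1.554357 : ℝ) := by
  rw [LV_eq, log3pr_split]
  linarith [log3pr4_lb, Real.log_two_gt_d9]

private lemma rLU_lb : (-0.411196 : ℝ) ≤ Real.sqrt 3 * LU := by
  nlinarith [mul_nonneg (by linarith [sqrt3_lb] : (0:ℝ) ≤ Real.sqrt 3 - 1.7320508)
      (by linarith [LU_lb] : (0:ℝ) ≤ LU - (-0.2374038)), sqrt3_ub, LU_ub, LU_lb, sqrt3_lb]

private lemma rLU_ub : Real.sqrt 3 * LU ≤ (-0.411173 : ℝ) := by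
  nlinarith [mul_nonneg (by linarith [sqrt3_lb] : (0:ℝ) ≤ Real.sqrt 3 - 1.7320508)
      (by linarith [LU_ub] : (0:ℝ) ≤ (-0.2373914) - LU), sqrt3_ub, LU_ub, LU_lb, sqrt3_lb]

private lemma rLV_lb : (-2.692230 : ℝ) ≤ Real.sqrt 3 * LV := by
  nlinarith [mul_nonneg (by linarith [sqrt3_lb] : (0:ℝ) ≤ Real.sqrt 3 - 1.7320508)
      (by linarith [LV_lb] : (0:ℝ) ≤ LV - (-1.5543593)), sqrt3_ub, LV_ub, LV_lb, sqrt3_lb]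

private lemma rLV_ub : Real.sqrt 3 * LV ≤ (-2.692225 : ℝ) := by
  nlinarith [mul_nonneg (by linarith [sqrt3_lb] : (0:ℝ) ≤ Real.sqrt 3 - 1.7320508)
      (by linarith [LV_ub] : (0:ℝ) ≤ (-1.554357) - LV), sqrt3_ub, LV_ub, LV_lb, sqrt3_lb]

private lemma BB_ub : BB ≤ (3.9075 : ℝ) := by
  rw [BB]
  nlinarith [rLU_lb, rLV_ub, LU_lb, LV_lb]

private lemma CC_nonpos : CC ≤ 0 := by
  rw [CC]
  nlinarith [rLU_ub, rLV_lb, LU_ub, LV_ub]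

set_option maxHeartbeats 1600000 in
/-- The key pointwise inequality: on `[2/3, 1]`,
`BB (u - u²) + CC (u - u²)² ≤ -u log u - (1-u) log(1-u)`. -/
private lemma main_u {u : ℝ} (h1 : 2 / 3 ≤ u) (h2 : u ≤ 1) :
    BB * (u - u ^ 2) + CC * (u - u ^ 2) ^ 2 ≤
      -(u * Real.log u) - (1 - u) * Real.log (1 - u) := by
  obtain ⟨r, hrdef⟩ : ∃ r : ℝ, r = Real.sqrt 3 := ⟨_, rfl⟩
  have hr3 : r ^ 2 = 3 := by rw [hrdef]; exact sqrt3_sq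
  have hrl : (1.7320508 : ℝ) < r := by rw [hrdef]; exact sqrt3_lb
  have hru : r < (1.7320509 : ℝ) := by rw [hrdef]; exact sqrt3_ub
  have hBBeq : BB = -6 * (LU + LV) - 3 * r * (LU - LV) := by rw [hrdef]; rfl
  have hCCeq : CC = 18 * (LU + LV) + 12 * r * (LU - LV) := by rw [hrdef]; rfl
  have hLUl := LU_lb; have hLUu := LU_ub
  have hLVl := LV_lb; have hLVu := LV_ub
  have hrLUl : (-0.411196 : ℝ) ≤ r * LU := by rw [hrdef]; exact rLU_lb
  have hrLUu : r * LU ≤ (-0.411173 : ℝ) := by rw [hrdef]; exact rLU_ub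
  have hrLVl : (-2.692230 : ℝ) ≤ r * LV := by rw [hrdef]; exact rLV_lb
  have hrLVu : r * LV ≤ (-2.692225 : ℝ) := by rw [hrdef]; exact rLV_ub
  have hu0 : (0:ℝ) < u := by linarith
  rcases eq_or_lt_of_le h2 with he | hlt
  · -- u = 1
    subst he
    norm_num
  · have h1u : (0:ℝ) < 1 - u := by linarith
    rcases le_or_gt u (15 / 16) with hcase | hcase
    · -- main piece: [2/3, 15/16]
      have h3r : (0:ℝ) < 3 - r := by linarith
      have h3rp : (0:ℝ) < 3 + r := by linarith
      -- log u ≤ LU + σ(s1), s1 = (u - u₀)(3 - r)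
      have harg1 : (1:ℝ) + (u - (1 / 2 + r / 6)) * (3 - r) = u * (3 - r) := by
        linear_combination (1 / 6 : ℝ) * hr3
      have hlogu : Real.log u ≤ LU + ((u - (1 / 2 + r / 6)) * (3 - r) -
          ((u - (1 / 2 + r / 6)) * (3 - r)) ^ 2 / 2 +
          ((u - (1 / 2 + r / 6)) * (3 - r)) ^ 3 / 3) := by
        have hpos : (0:ℝ) < 1 + (u - (1 / 2 + r / 6)) * (3 - r) := by
          rw [harg1]; positivity
        have hcub := log1p_le_cubic (s := (u - (1 / 2 + r / 6)) * (3 - r)) (by linarith)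
        rw [harg1, Real.log_mul (ne_of_gt hu0) (ne_of_gt h3r)] at hcub
        have hLUeq : LU + Real.log (3 - r) = 0 := by
          rw [LU_eq, hrdef]; ring
        linarith
      -- log (1-u) ≤ LV + σ(s2), s2 = (u₀ - u)(3 + r)
      have harg2 : (1:ℝ) + ((1 / 2 + r / 6) - u) * (3 + r) = (1 - u) * (3 + r) := by
        linear_combination (1 / 6 : ℝ) * hr3
      have hlog1u : Real.log (1 - u) ≤ LV + (((1 / 2 + r / 6) - u) * (3 + r) -
          (((1 / 2 + r / 6) - u) * (3 + r)) ^ 2 / 2 +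
          (((1 / 2 + r / 6) - u) * (3 + r)) ^ 3 / 3) := by
        have hpos : (0:ℝ) < 1 + ((1 / 2 + r / 6) - u) * (3 + r) := by
          rw [harg2]; positivity
        have hcub := log1p_le_cubic (s := ((1 / 2 + r / 6) - u) * (3 + r)) (by linarith)
        rw [harg2, Real.log_mul (ne_of_gt h1u) (ne_of_gt h3rp)] at hcub
        have hLVeq : LV + Real.log (3 + r) = 0 := by
          rw [LV_eq, hrdef]; ring
        linarith
      -- bounds on the quadratic cofactor e(u)
      have hE2 : (-31.1213 : ℝ) ≤ -36 - 18 * LU - 18 * LV - 12 * (r * LU) + 12 * (r * LV) := by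
        linarith
      have hE1 : (51.2581 : ℝ) ≤ 36 + 10 * r + 6 * LU + 30 * LV + 6 * (r * LU) - 18 * (r * LV) := by
        linarith
      have hE0 : (-20.1614 : ℝ) ≤ -14 - 5 * r - 12 * LV + 6 * (r * LV) := by
        linarith
      have hquad : (0:ℝ) ≤ (-31.1213 : ℝ) * u ^ 2 + (51.2581 : ℝ) * u + (-20.1614 : ℝ) := by
        have hprod : (0:ℝ) ≤ (u - 2 / 3) * (15 / 16 - u) :=
          mul_nonneg (by linarith) (by linarith)
        linarith [hprod]
      have hepos : (0:ℝ) ≤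
          (-36 - 18 * LU - 18 * LV - 12 * (r * LU) + 12 * (r * LV)) * u ^ 2 +
          (36 + 10 * r + 6 * LU + 30 * LV + 6 * (r * LU) - 18 * (r * LV)) * u +
          (-14 - 5 * r - 12 * LV + 6 * (r * LV)) := by
        have t2 : (-31.1213 : ℝ) * u ^ 2 ≤
            (-36 - 18 * LU - 18 * LV - 12 * (r * LU) + 12 * (r * LV)) * u ^ 2 :=
          mul_le_mul_of_nonneg_right hE2 (sq_nonneg u)
        have t1 : (51.2581 : ℝ) * u ≤
            (36 + 10 * r + 6 * LU + 30 * LV + 6 * (r * LU) - 18 * (r * LV)) * u :=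
          mul_le_mul_of_nonneg_right hE1 hu0.le
        linarith
      -- the exact factorization
      have hfact :
          -(u * (LU + ((u - (1 / 2 + r / 6)) * (3 - r) -
            ((u - (1 / 2 + r / 6)) * (3 - r)) ^ 2 / 2 +
            ((u - (1 / 2 + r / 6)) * (3 - r)) ^ 3 / 3))) -
          (1 - u) * (LV + (((1 / 2 + r / 6) - u) * (3 + r) -
            (((1 / 2 + r / 6) - u) * (3 + r)) ^ 2 / 2 +
            (((1 / 2 + r / 6) - u) * (3 + r)) ^ 3 / 3)) -
          ((-6 * (LU + LV) - 3 * r * (LU - LV)) * (u - u ^ 2) +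
            (18 * (LU + LV) + 12 * r * (LU - LV)) * (u - u ^ 2) ^ 2) =
          (u - (1 / 2 + r / 6)) ^ 2 *
            ((-36 - 18 * LU - 18 * LV - 12 * (r * LU) + 12 * (r * LV)) * u ^ 2 +
            (36 + 10 * r + 6 * LU + 30 * LV + 6 * (r * LU) - 18 * (r * LV)) * u +
            (-14 - 5 * r - 12 * LV + 6 * (r * LV))) := by
        linear_combination ((-2/3 : ℝ) + (-2/3)*LV + (-11/18)*r + (-1/6)*r*LV +
          (-43/216)*r^2 + (-1/36)*r^3 + (-1/648)*r^4 + (25/6)*u + (25/6)*u*LV +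
          (-7/6)*u*LU + (26/9)*u*r + (1/2)*u*r*LV + (-1/6)*u*r*LU + (2/3)*u*r^2 +
          (1/18)*u*r^3 + (-61/6)*u^2 + (-15/2)*u^2*LV + (9/2)*u^2*LU + (-5)*u^2*r +
          (-1/3)*u^2*r*LV + (1/3)*u^2*r*LU + (-2/3)*u^2*r^2 + (12)*u^3 + (4)*u^3*LV +
          (-4)*u^3*LU + (10/3)*u^3*r + (-6)*u^4) * hr3
      have hm1 : u * Real.log u ≤ u * (LU + ((u - (1 / 2 + r / 6)) * (3 - r) -
          ((u - (1 / 2 + r / 6)) * (3 - r)) ^ 2 / 2 +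
          ((u - (1 / 2 + r / 6)) * (3 - r)) ^ 3 / 3)) :=
        mul_le_mul_of_nonneg_left hlogu hu0.le
      have hm2 : (1 - u) * Real.log (1 - u) ≤ (1 - u) * (LV + (((1 / 2 + r / 6) - u) * (3 + r) -
          (((1 / 2 + r / 6) - u) * (3 + r)) ^ 2 / 2 +
          (((1 / 2 + r / 6) - u) * (3 + r)) ^ 3 / 3)) :=
        mul_le_mul_of_nonneg_left hlog1u h1u.le
      have hsq := mul_nonneg (sq_nonneg (u - (1 / 2 + r / 6))) hepos
      rw [hBBeq, hCCeq]
      linarith [hfact, hsq, hm1, hm2]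
    · -- tail piece: (15/16, 1)
      have hlogu : Real.log u ≤ u - 1 := Real.log_le_sub_one_of_pos hu0
      have hlog1u : Real.log (1 - u) ≤ 16 * (1 - u) - 1 - 4 * Real.log 2 := by
        have h16 : Real.log (16 * (1 - u)) ≤ 16 * (1 - u) - 1 :=
          Real.log_le_sub_one_of_pos (by linarith)
        have : Real.log (16 * (1 - u)) = Real.log 16 + Real.log (1 - u) :=
          Real.log_mul (by norm_num) (ne_of_gt h1u)
        have h16e : Real.log (16 : ℝ) = 4 * Real.log 2 := by
          rw [show (16:ℝ) = 2 ^ 4 by norm_num, Real.log_pow]; push_cast; ring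
        linarith
      have hm1 : u * Real.log u ≤ u * (u - 1) := mul_le_mul_of_nonneg_left hlogu hu0.le
      have hm2 : (1 - u) * Real.log (1 - u) ≤
          (1 - u) * (16 * (1 - u) - 1 - 4 * Real.log 2) :=
        mul_le_mul_of_nonneg_left hlog1u h1u.le
      have hBu := BB_ub
      have hC0 := CC_nonpos
      have hl2 := Real.log_two_gt_d9
      -- BB (u - u²) ≤ 3.9075 u (1-u);  CC (u-u²)² ≤ 0
      have hv : (0:ℝ) ≤ u - u ^ 2 := by nlinarith
      have hBv : BB * (u - u ^ 2) ≤ (3.9075 : ℝ) * (u - u ^ 2) :=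
        mul_le_mul_of_nonneg_right hBu hv
      have hCv : CC * (u - u ^ 2) ^ 2 ≤ 0 :=
        mul_nonpos_of_nonpos_of_nonneg hC0 (sq_nonneg _)
      -- final: 3.9075 u(1-u) ≤ -u(u-1) - (1-u)(16(1-u) - 1 - 4 log 2)
      have hfin : (3.9075 : ℝ) * (u - u ^ 2) ≤
          -(u * (u - 1)) - (1 - u) * (16 * (1 - u) - 1 - 4 * Real.log 2) := by
        nlinarith [mul_nonneg (by linarith : (0:ℝ) ≤ 1 - u)
            (by nlinarith : (0:ℝ) ≤ u * (17 - 3.9075) + 4 * Real.log 2 - 15)]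
      linarith
  
private lemma logtwo_mul_binH (x : ℝ) :
    Real.log 2 * binH x = -(x * Real.log x) - (1 - x) * Real.log (1 - x) := by
  have hL : Real.log 2 ≠ 0 := ne_of_gt (Real.log_pos one_lt_two)
  rw [binH, ← Real.log_div_log, ← Real.log_div_log]
  field_simp

/-- Per-point bound in terms of `z = cos θ`. -/
private lemma keyz {z : ℝ} (hz1 : -1 ≤ z) (hz2 : z ≤ 1) :
    BB * ((1 - z) / 9) + CC * ((1 - z) / 9) ^ 2 ≤ Real.log 2 * trineF z := by
  have h45 : (0:ℝ) ≤ 4 * z + 5 := by linarith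
  have hs2 : Real.sqrt (4 * z + 5) ^ 2 = 4 * z + 5 := Real.sq_sqrt h45
  have hs1 : (1:ℝ) ≤ Real.sqrt (4 * z + 5) := by
    have := Real.sqrt_le_sqrt (show (1:ℝ) ≤ 4 * z + 5 by linarith)
    rwa [Real.sqrt_one] at this
  have hs3 : Real.sqrt (4 * z + 5) ≤ 3 := by
    have := Real.sqrt_le_sqrt (show (4 * z + 5 : ℝ) ≤ 9 by linarith)
    rwa [show (9:ℝ) = 3 ^ 2 by norm_num, Real.sqrt_sq (by norm_num : (0:ℝ) ≤ 3)] at this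
  set u : ℝ := 1 / 2 + Real.sqrt (4 * z + 5) / 6 with hu
  have hu1 : 2 / 3 ≤ u := by rw [hu]; linarith
  have hu2 : u ≤ 1 := by rw [hu]; linarith
  have hveq : u - u ^ 2 = (1 - z) / 9 := by
    rw [hu]; linear_combination (-1 / 36 : ℝ) * hs2
  have hmain := main_u hu1 hu2
  have hF : trineF z = binH u := rfl
  rw [hF, logtwo_mul_binH, ← hveq]
  exact hmain

set_option maxHeartbeats 1600000 in
/-- For every `θ`, `E(θ) ≥ (2/3)·H((1/2)(1 − 1/√3))`, with equality
at `θ = 0`.  (This value `≈ 0.496` ebits is the entanglement cost of the trine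
measurement.) -/
theorem trine_cost :
    (∀ θ : ℝ, (2 / 3) * binH ((1 / 2) * (1 - 1 / Real.sqrt 3)) ≤ trineE θ) ∧
      trineE 0 = (2 / 3) * binH ((1 / 2) * (1 - 1 / Real.sqrt 3)) := by
  have hr3 := sqrt3_sq
  have hrpos : (0:ℝ) < Real.sqrt 3 := by linarith [sqrt3_lb]
  have harg : (1 / 2 : ℝ) * (1 - 1 / Real.sqrt 3) = 1 / 2 - Real.sqrt 3 / 6 := by
    have : (1:ℝ) / Real.sqrt 3 = Real.sqrt 3 / 3 := by
      rw [div_eq_div_iff (by positivity) (by norm_num)]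
      linarith [hr3]
    rw [this]; ring
  have hL2pos : (0:ℝ) < Real.log 2 := Real.log_pos one_lt_two
  -- log 2 * binH(1/2 - √3/6) in terms of LU, LV
  have hHb : Real.log 2 * binH (1 / 2 - Real.sqrt 3 / 6) =
      -((1 / 2 - Real.sqrt 3 / 6) * LV) - (1 / 2 + Real.sqrt 3 / 6) * LU := by
    rw [logtwo_mul_binH, show (1:ℝ) - (1 / 2 - Real.sqrt 3 / 6) = 1 / 2 + Real.sqrt 3 / 6
      by ring, LU, LV]
  have hBC : BB / 3 + CC / 18 =
      2 * (-((1 / 2 - Real.sqrt 3 / 6) * LV) - (1 / 2 + Real.sqrt 3 / 6) * LU) := by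
    rw [BB, CC]; ring
  constructor
  · intro θ
    have hcos23 : Real.cos (2 * Real.pi / 3) = -(1 / 2) := by
      rw [show 2 * Real.pi / 3 = Real.pi - Real.pi / 3 by ring, Real.cos_pi_sub,
        Real.cos_pi_div_three]
    have hsin23 : Real.sin (2 * Real.pi / 3) = Real.sqrt 3 / 2 := by
      rw [show 2 * Real.pi / 3 = Real.pi - Real.pi / 3 by ring, Real.sin_pi_sub,
        Real.sin_pi_div_three]
    have hc2 : Real.cos (θ + 2 * Real.pi / 3) =
        Real.cos θ * (-(1 / 2)) - Real.sin θ * (Real.sqrt 3 / 2) := by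
      rw [Real.cos_add, hcos23, hsin23]
    have hc3 : Real.cos (θ - 2 * Real.pi / 3) =
        Real.cos θ * (-(1 / 2)) + Real.sin θ * (Real.sqrt 3 / 2) := by
      rw [Real.cos_sub, hcos23, hsin23]
    have hpyth := Real.sin_sq_add_cos_sq θ
    -- the three inequalities
    have k1 := keyz (Real.neg_one_le_cos θ) (Real.cos_le_one θ)
    have k2 := keyz (Real.neg_one_le_cos (θ + 2 * Real.pi / 3))
      (Real.cos_le_one (θ + 2 * Real.pi / 3))
    have k3 := keyz (Real.neg_one_le_cos (θ - 2 * Real.pi / 3))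
      (Real.cos_le_one (θ - 2 * Real.pi / 3))
    -- sum of the right-hand sides equals BB/3 + CC/18
    have hsum : BB * ((1 - Real.cos θ) / 9) + CC * ((1 - Real.cos θ) / 9) ^ 2 +
        (BB * ((1 - Real.cos (θ + 2 * Real.pi / 3)) / 9) +
          CC * ((1 - Real.cos (θ + 2 * Real.pi / 3)) / 9) ^ 2) +
        (BB * ((1 - Real.cos (θ - 2 * Real.pi / 3)) / 9) +
          CC * ((1 - Real.cos (θ - 2 * Real.pi / 3)) / 9) ^ 2) =
        BB / 3 + CC / 18 := by
      rw [hc2, hc3]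
      linear_combination (CC / 54 : ℝ) * hpyth +
        (CC / 162 : ℝ) * (Real.sin θ) ^ 2 * hr3
    -- combine
    have hEθ : trineE θ = (1 / 3) * (trineF (Real.cos θ) +
        trineF (Real.cos (θ + 2 * Real.pi / 3)) +
        trineF (Real.cos (θ - 2 * Real.pi / 3))) := rfl
    rw [harg]
    have final : Real.log 2 * (2 / 3 * binH (1 / 2 - Real.sqrt 3 / 6)) ≤
        Real.log 2 * trineE θ := by
      calc Real.log 2 * (2 / 3 * binH (1 / 2 - Real.sqrt 3 / 6))
        = (2 / 3) * (Real.log 2 * binH (1 / 2 - Real.sqrt 3 / 6)) := by ring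
      _ = (2 / 3) * (-((1 / 2 - Real.sqrt 3 / 6) * LV) -
            (1 / 2 + Real.sqrt 3 / 6) * LU) := by rw [hHb]
      _ = (1 / 3) * (BB / 3 + CC / 18) := by rw [hBC]; ring
      _ ≤ (1 / 3) * (Real.log 2 * trineF (Real.cos θ) +
            Real.log 2 * trineF (Real.cos (θ + 2 * Real.pi / 3)) +
            Real.log 2 * trineF (Real.cos (θ - 2 * Real.pi / 3))) := by
          rw [← hsum]; linarith [k1, k2, k3]
      _ = Real.log 2 * trineE θ := by rw [hEθ]; ring
    exact le_of_mul_le_mul_left final hL2pos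
  · -- equality at θ = 0
    have hc1 : Real.cos (0:ℝ) = 1 := Real.cos_zero
    have hcos23 : Real.cos (2 * Real.pi / 3) = -(1 / 2) := by
      rw [show 2 * Real.pi / 3 = Real.pi - Real.pi / 3 by ring, Real.cos_pi_sub,
        Real.cos_pi_div_three]
    have hc2 : Real.cos ((0:ℝ) + 2 * Real.pi / 3) = -(1 / 2) := by
      rw [zero_add, hcos23]
    have hc3 : Real.cos ((0:ℝ) - 2 * Real.pi / 3) = -(1 / 2) := by
      rw [zero_sub, Real.cos_neg, hcos23]
    have hF1 : trineF 1 = 0 := by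
      have h9 : Real.sqrt (4 * 1 + 5) = 3 := by
        rw [show (4 * 1 + 5 : ℝ) = 3 ^ 2 by norm_num,
          Real.sqrt_sq (by norm_num : (0:ℝ) ≤ 3)]
      rw [trineF, h9]
      norm_num [binH, Real.logb]
    have hF2 : trineF (-(1 / 2)) = binH (1 / 2 + Real.sqrt 3 / 6) := by
      rw [trineF, show (4 * -(1 / 2) + 5 : ℝ) = 3 by norm_num]
    have hsym : binH (1 / 2 + Real.sqrt 3 / 6) = binH (1 / 2 - Real.sqrt 3 / 6) := by
      rw [binH, binH, show (1:ℝ) - (1 / 2 + Real.sqrt 3 / 6) = 1 / 2 - Real.sqrt 3 / 6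
        by ring, show (1:ℝ) - (1 / 2 - Real.sqrt 3 / 6) = 1 / 2 + Real.sqrt 3 / 6 by ring]
      ring
    rw [trineE, hc1, hc2, hc3, hF1, hF2, hsym, harg]
    ring
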